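/- Let M ~ Binomial(N−1, 1/2). Then (1/N) E[|M + 1 − N/2|] ≤ (1/N)(√(N−1)/2 + 1), and hence the average deviation incentive of the mean field policy in the N-player Pigou game (which equals T·(1/N)·E[max{N/2 − M − 1, M + 1 − N/2}] up to truncation at 0) tends to 0 at rate O(1/√N). -/

import Mathlib

open Finset Filter

/-!
The factorial moments of `Binomial(n, 1/2)` give its variance `n / 4`, so by Cauchy–Schwarz
`E|M - n/2| ≤ √n / 2`; shifting the centre by `1/2` costs at most `1/2`. The maximum in the
deviation incentive is `|M + 1 - N/2|`, so after dividing by `N` the incentive is `O(1/√N)`.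
-/

theorem sum_range_choose_real (n : ℕ) : ∑ m ∈ range (n + 1), (n.choose m : ℝ) = 2 ^ n := by
  exact_mod_cast Nat.sum_range_choose n

theorem sum_range_choose_div_two_pow (n : ℕ) :
    ∑ m ∈ range (n + 1), (n.choose m : ℝ) / 2 ^ n = 1 := by
  rw [← sum_div, sum_range_choose_real, div_self (by positivity)]

/-- Absorption `m * C(n+1, m) = (n+1) * C(n, m-1)`, summed against an arbitrary weight. -/
theorem sum_range_mul_choose_succ_mul (n : ℕ) (f : ℕ → ℝ) :
    ∑ m ∈ range (n + 2), (m : ℝ) * ((n + 1).choose m : ℝ) * f m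
      = ((n : ℝ) + 1) * ∑ k ∈ range (n + 1), (n.choose k : ℝ) * f (k + 1) := by
  rw [sum_range_succ', mul_sum]
  simp only [Nat.cast_zero, zero_mul, add_zero]
  refine sum_congr rfl fun k _ => ?_
  have absorb : ((n : ℝ) + 1) * (n.choose k : ℝ) = ((n + 1).choose (k + 1) : ℝ) * ((k : ℝ) + 1) := by
    exact_mod_cast Nat.add_one_mul_choose_eq n k
  push_cast
  linear_combination -f (k + 1) * absorb

theorem sum_range_mul_choose_real (n : ℕ) :
    ∑ m ∈ range (n + 1), (m : ℝ) * (n.choose m : ℝ) = (n : ℝ) * 2 ^ n / 2 := by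
  cases n with
  | zero => simp
  | succ n =>
    have shifted := sum_range_mul_choose_succ_mul n (fun _ => 1)
    simp only [mul_one, sum_range_choose_real] at shifted
    rw [shifted]
    push_cast
    ring

theorem sum_range_mul_sub_one_mul_choose (n : ℕ) :
    ∑ m ∈ range (n + 1), (m : ℝ) * ((m : ℝ) - 1) * (n.choose m : ℝ)
      = (n : ℝ) * ((n : ℝ) - 1) * 2 ^ n / 4 := by
  cases n with
  | zero => simp
  | succ n =>
    have shifted := sum_range_mul_choose_succ_mul n (fun m => (m : ℝ) - 1)
    simp only [Nat.cast_add_one, add_sub_cancel_right] at shifted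
    calc _ = ∑ m ∈ range (n + 2), (m : ℝ) * ((n + 1).choose m : ℝ) * ((m : ℝ) - 1) :=
          sum_congr rfl fun _ _ => by ring
      _ = ((n : ℝ) + 1) * ∑ k ∈ range (n + 1), (k : ℝ) * (n.choose k : ℝ) := by
          rw [shifted]; simp_rw [mul_comm]
      _ = _ := by rw [sum_range_mul_choose_real]; push_cast; ring

theorem sum_range_choose_mul_sub_half_sq (n : ℕ) :
    ∑ m ∈ range (n + 1), (n.choose m : ℝ) * ((m : ℝ) - (n : ℝ) / 2) ^ 2 = (n : ℝ) / 4 * 2 ^ n := by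
  have expand : ∀ m ∈ range (n + 1), (n.choose m : ℝ) * ((m : ℝ) - (n : ℝ) / 2) ^ 2
      = (m : ℝ) * ((m : ℝ) - 1) * (n.choose m : ℝ) + (1 - (n : ℝ)) * ((m : ℝ) * (n.choose m : ℝ))
        + (n : ℝ) ^ 2 / 4 * (n.choose m : ℝ) := fun m _ => by ring
  rw [sum_congr rfl expand, sum_add_distrib, sum_add_distrib, ← mul_sum, ← mul_sum,
    sum_range_mul_sub_one_mul_choose, sum_range_mul_choose_real, sum_range_choose_real]
  ring

theorem sum_mul_abs_le_sqrt_sum_mul_sq {ι : Type*} {s : Finset ι} {p : ι → ℝ} (f : ι → ℝ)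
    (hp : ∀ i ∈ s, 0 ≤ p i) (hp_sum : ∑ i ∈ s, p i = 1) :
    ∑ i ∈ s, p i * |f i| ≤ √(∑ i ∈ s, p i * f i ^ 2) := by
  apply Real.le_sqrt_of_sq_le
  calc (∑ i ∈ s, p i * |f i|) ^ 2 ≤ (∑ i ∈ s, p i) * ∑ i ∈ s, p i * f i ^ 2 :=
        sum_sq_le_sum_mul_sum_of_sq_le_mul s hp (fun i hi => mul_nonneg (hp i hi) (sq_nonneg _))
          fun i _ => le_of_eq (by rw [mul_pow, sq_abs]; ring)
    _ = ∑ i ∈ s, p i * f i ^ 2 := by rw [hp_sum, one_mul]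

theorem sum_choose_div_two_pow_mul_abs_sub_half_le (n : ℕ) :
    ∑ m ∈ range (n + 1), (n.choose m : ℝ) / 2 ^ n * |(m : ℝ) - (n : ℝ) / 2| ≤ √n / 2 := by
  have variance : ∑ m ∈ range (n + 1), (n.choose m : ℝ) / 2 ^ n * ((m : ℝ) - (n : ℝ) / 2) ^ 2
      = (n : ℝ) / 2 ^ 2 := by
    simp_rw [div_mul_eq_mul_div, ← sum_div, sum_range_choose_mul_sub_half_sq]
    field_simp
    ring
  calc _ ≤ √(∑ m ∈ range (n + 1), (n.choose m : ℝ) / 2 ^ n * ((m : ℝ) - (n : ℝ) / 2) ^ 2) :=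
        sum_mul_abs_le_sqrt_sum_mul_sq _ (fun _ _ => by positivity) (sum_range_choose_div_two_pow n)
    _ = √n / 2 := by rw [variance, Real.sqrt_div' _ (by norm_num), Real.sqrt_sq two_pos.le]

theorem sum_choose_div_two_pow_mul_abs_add_one_sub_half_le (n : ℕ) :
    ∑ m ∈ range (n + 1), (n.choose m : ℝ) / 2 ^ n * |(m : ℝ) + 1 - ((n : ℝ) + 1) / 2|
      ≤ √n / 2 + 1 / 2 := by
  have shift : ∀ m ∈ range (n + 1), (n.choose m : ℝ) / 2 ^ n * |(m : ℝ) + 1 - ((n : ℝ) + 1) / 2|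
      ≤ (n.choose m : ℝ) / 2 ^ n * |(m : ℝ) - (n : ℝ) / 2| + 1 / 2 * ((n.choose m : ℝ) / 2 ^ n) :=
    fun m _ => by
      have triangle : |(m : ℝ) + 1 - ((n : ℝ) + 1) / 2| ≤ |(m : ℝ) - (n : ℝ) / 2| + 1 / 2 :=
        calc _ = |((m : ℝ) - (n : ℝ) / 2) + 1 / 2| := by ring_nf
          _ ≤ |(m : ℝ) - (n : ℝ) / 2| + |(1 : ℝ) / 2| := abs_add_le _ _
          _ = _ := by norm_num
      calc _ ≤ (n.choose m : ℝ) / 2 ^ n * (|(m : ℝ) - (n : ℝ) / 2| + 1 / 2) := by gcongr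
        _ = _ := by ring
  calc _ ≤ _ := sum_le_sum shift
    _ ≤ √n / 2 + 1 / 2 := by
      rw [sum_add_distrib, ← mul_sum, sum_range_choose_div_two_pow, mul_one]
      linarith [sum_choose_div_two_pow_mul_abs_sub_half_le n]

theorem tendsto_inv_mul_sqrt_sub_one_div_two_add_one :
    Tendsto (fun N : ℕ => 1 / (N : ℝ) * (√((N : ℝ) - 1) / 2 + 1)) atTop (nhds 0) := by
  have sqrt_div : Tendsto (fun N : ℕ => √((N : ℝ) - 1) / N) atTop (nhds 0) := by
    have inv_sqrt : Tendsto (fun N : ℕ => (√(N : ℝ))⁻¹) atTop (nhds 0) :=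
      (Real.tendsto_sqrt_atTop.comp tendsto_natCast_atTop_atTop).inv_tendsto_atTop
    refine squeeze_zero (fun _ => by positivity) (fun N => ?_) inv_sqrt
    rw [← Real.sqrt_div_self]
    gcongr
    linarith
  have := (sqrt_div.div_const 2).add tendsto_one_div_atTop_nhds_zero_nat
  rw [zero_div, add_zero] at this
  refine this.congr fun N => ?_
  ring

theorem pigou_deviation_incentive_sqrt_rate_general (T : ℝ) :
    (∀ N : ℕ, 1 ≤ N →
      (1 / (N : ℝ)) * ∑ m ∈ Finset.range N, (((N - 1).choose m : ℝ) / 2 ^ (N - 1)) *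
          |(m : ℝ) + 1 - (N : ℝ) / 2| ≤
        (1 / (N : ℝ)) * (Real.sqrt ((N : ℝ) - 1) / 2 + 1)) ∧
    Tendsto (fun N : ℕ =>
        T * ((1 / (N : ℝ)) * ∑ m ∈ Finset.range N, (((N - 1).choose m : ℝ) / 2 ^ (N - 1)) *
          max ((N : ℝ) / 2 - (m : ℝ) - 1) ((m : ℝ) + 1 - (N : ℝ) / 2)))
      atTop (nhds 0) := by
  have bound : ∀ N : ℕ, 1 ≤ N →
      (1 / (N : ℝ)) * ∑ m ∈ Finset.range N, (((N - 1).choose m : ℝ) / 2 ^ (N - 1)) *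
          |(m : ℝ) + 1 - (N : ℝ) / 2| ≤
        (1 / (N : ℝ)) * (Real.sqrt ((N : ℝ) - 1) / 2 + 1) := by
    rintro N hN
    obtain ⟨n, rfl⟩ := Nat.exists_eq_add_of_le' hN
    simp only [Nat.add_sub_cancel, Nat.cast_add_one, add_sub_cancel_right]
    gcongr
    linarith [sum_choose_div_two_pow_mul_abs_add_one_sub_half_le n]
  refine ⟨bound, ?_⟩
  have max_eq_abs : ∀ x : ℝ, max (-x) x = |x| := fun x => by rw [max_comm, abs_eq_max_neg]
  simp_rw [show ∀ N m : ℕ, (N : ℝ) / 2 - m - 1 = -((m : ℝ) + 1 - N / 2) from fun _ _ => by ring,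
    max_eq_abs]
  have deviation : Tendsto (fun N : ℕ => (1 / (N : ℝ)) * ∑ m ∈ Finset.range N,
      (((N - 1).choose m : ℝ) / 2 ^ (N - 1)) * |(m : ℝ) + 1 - (N : ℝ) / 2|) atTop (nhds 0) :=
    tendsto_of_tendsto_of_tendsto_of_le_of_le' tendsto_const_nhds
      tendsto_inv_mul_sqrt_sub_one_div_two_add_one (Eventually.of_forall fun _ => by positivity)
      (eventually_ge_atTop 1 |>.mono bound)
  simpa using deviation.const_mul T

/-- Let `M ~ Binomial(N−1, 1/2)`.  Then `(1/N)·E[|M + 1 − N/2|] ≤ (1/N)(√(N−1)/2 + 1)`, and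
consequently the average deviation incentive of the mean field policy in the `N`-player
Pigou game, `T·(1/N)·E[max{N/2 − M − 1, M + 1 − N/2}]`, tends to `0` as `N → ∞` (at rate
`O(1/√N)`).  Expectations are written as sums over the binomial distribution. -/
theorem pigou_deviation_incentive_sqrt_rate (T : ℝ) (hT : 0 < T) :
    (∀ N : ℕ, 1 ≤ N →
      (1 / (N : ℝ)) * ∑ m ∈ Finset.range N, (((N - 1).choose m : ℝ) / 2 ^ (N - 1)) *
          |(m : ℝ) + 1 - (N : ℝ) / 2| ≤
        (1 / (N : ℝ)) * (Real.sqrt ((N : ℝ) - 1) / 2 + 1)) ∧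
    Tendsto (fun N : ℕ =>
        T * ((1 / (N : ℝ)) * ∑ m ∈ Finset.range N, (((N - 1).choose m : ℝ) / 2 ^ (N - 1)) *
          max ((N : ℝ) / 2 - (m : ℝ) - 1) ((m : ℝ) + 1 - (N : ℝ) / 2)))
      atTop (nhds 0) :=
  pigou_deviation_incentive_sqrt_rate_general T
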